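/- arXiv:2601.08062 — 6 statements merged into one kernel-verified Lean document; each statement's English description precedes it below -/
import Mathlib

section
/- Let (β_g)_{g≥1} be the sequence of rational numbers defined by β_1 = 1/2 and, for g ≥ 2, β_g = (1/2)·Σ_{ℓ=1}^{g−1} β_ℓ·β_{g−ℓ} + (1/2)·Σ over all tuples (k_1,…,k_{g−1}) of nonnegative integers with k_1 + 2k_2 + … + (g−1)k_{g−1} = g−1 of ((k_1+k_2+…+k_{g−1})!/(k_1!·k_2!⋯k_{g−1}!))·((k_1+…+k_{g−1}) + 1)·Π_{ℓ=1}^{g−1} β_ℓ^{k_ℓ}. Then for every g ≥ 1, 2^{2g−1}·β_g = C_{2g−1}, where C_m denotes the m-th Catalan number. -/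
/-!
Put `a_ℓ = 2 C_{2ℓ-1}` and `A(x) = ∑_{ℓ ≥ 1} a_ℓ x^ℓ`. The candidate solution `β_g = a_g / 4^g`
turns the recurrence into `a_g = ½ ∑ a_ℓ a_{g-ℓ} + 2 [x^{g-1}] (1 - A)⁻²`: the tuple sum is
the multinomial expansion of `(1 - A)⁻² = ∑ (n+1) Aⁿ`. Splitting the Catalan recurrence by
parity shows that `E(x) = ∑ C_{2j} x^j` satisfies `E = 1 + A E`, so `(1 - A)⁻² = E²`, and that
`C_{2g-1} = ∑ C_{2ℓ-1} C_{2(g-ℓ)-1} + [x^{g-1}] E²`. Only coefficients below `x^g` matter, so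
`A` is truncated to a polynomial and `(1 - A)⁻¹` is replaced by `∑_{n<g} Aⁿ`. The recurrence
determines `β` from `β_1`, hence `β` is the candidate.
-/

open Finset

/-- The set of tuples `(k_1, …, k_{g-1}) ∈ ℕ^{g-1}` with `k_1 + 2k_2 + … + (g-1)k_{g-1} = g-1`,
represented as functions `Fin (g-1) → ℕ` (index `i` corresponds to `k_{i+1}`).  Every such tuple
has `k_ℓ ≤ g-1 < g`, so filtering inside `Finset.range g` captures all solutions. -/
def weightedTuples (g : ℕ) : Finset (Fin (g - 1) → ℕ) :=
  (Fintype.piFinset fun _ => Finset.range g).filter fun k =>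
    ∑ i, (i.1 + 1) * k i = g - 1

open Polynomial

theorem Finset.sum_range_two_mul {M : Type*} [AddCommMonoid M] (f : ℕ → M) (n : ℕ) :
    ∑ i ∈ range (2 * n), f i = ∑ i ∈ range n, (f (2 * i) + f (2 * i + 1)) := by
  induction n with
  | zero => simp
  | succ n ih =>
    rw [mul_add, mul_one, sum_range_succ, sum_range_succ, sum_range_succ, ih, add_assoc]

theorem Finset.sum_range_sum_range_add {M : Type*} [AddCommMonoid M] {h : ℕ → M} {N : ℕ}
    (hh : ∀ s, N ≤ s → h s = 0) :
    ∑ n ∈ range N, ∑ m ∈ range N, h (n + m) = ∑ s ∈ range N, (s + 1) • h s := by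
  have htriangle :
      ∀ n ∈ range N, ∑ m ∈ range N, h (n + m) = ∑ m ∈ range (N - n), h (n + m) := by
    intro n _
    refine (sum_subset (range_subset_range.2 (Nat.sub_le N n)) fun m _ hm => hh _ ?_).symm
    rw [mem_range] at hm
    omega
  have hdiag : ∀ s ∈ range N, ∑ k ∈ range (s + 1), h (k + (s - k)) = (s + 1) • h s := by
    intro s _
    rw [sum_congr rfl fun k hk => by
      rw [Nat.add_sub_cancel' (Nat.lt_succ_iff.1 (mem_range.1 hk))], sum_const, card_range]
  rw [sum_congr rfl htriangle, ← sum_range_diag_flip N fun n m => h (n + m), sum_congr rfl hdiag]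

theorem catalan_succ_eq_sum_range (n : ℕ) :
    catalan (n + 1) = ∑ i ∈ range (n + 1), catalan i * catalan (n - i) := by
  rw [catalan_succ, Fin.sum_univ_eq_sum_range (fun i => catalan i * catalan (n - i))]

theorem catalan_two_mul_add_two (n : ℕ) :
    catalan (2 * n + 2) =
      2 * ∑ i ∈ range (n + 1), catalan (2 * i + 1) * catalan (2 * (n - i)) := by
  have hodd : ∑ i ∈ range (n + 1), catalan (2 * i + 1) * catalan (2 * n + 1 - (2 * i + 1))
      = ∑ i ∈ range (n + 1), catalan (2 * i + 1) * catalan (2 * (n - i)) :=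
    sum_congr rfl fun i _ => by congr 2; omega
  have heven : ∑ i ∈ range (n + 1), catalan (2 * i) * catalan (2 * n + 1 - 2 * i)
      = ∑ i ∈ range (n + 1), catalan (2 * i + 1) * catalan (2 * (n - i)) := by
    rw [← sum_range_reflect]
    refine sum_congr rfl fun i hi => ?_
    rw [mem_range] at hi
    rw [mul_comm]
    congr 2; omega
  rw [catalan_succ_eq_sum_range, show 2 * n + 1 + 1 = 2 * (n + 1) by ring, sum_range_two_mul,
    sum_add_distrib, hodd, heven, two_mul]

theorem catalan_two_mul_sub_one {g : ℕ} (hg : 1 ≤ g) :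
    catalan (2 * g - 1) = ∑ ℓ ∈ Ico 1 g, catalan (2 * ℓ - 1) * catalan (2 * (g - ℓ) - 1)
      + ∑ j ∈ range g, catalan (2 * j) * catalan (2 * (g - 1 - j)) := by
  obtain ⟨n, rfl⟩ : ∃ n, g = n + 1 := ⟨g - 1, by omega⟩
  have hodd : ∑ i ∈ range n, catalan (2 * i + 1) * catalan (2 * n - (2 * i + 1))
      = ∑ ℓ ∈ Ico 1 (n + 1), catalan (2 * ℓ - 1) * catalan (2 * (n + 1 - ℓ) - 1) := by
    rw [sum_Ico_eq_sum_range, add_tsub_cancel_right]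
    exact sum_congr rfl fun i hi => by rw [mem_range] at hi; congr 2 <;> omega
  have heven :
      ∑ i ∈ range n, catalan (2 * i) * catalan (2 * n - 2 * i) + catalan (2 * n) * catalan 0
      = ∑ j ∈ range (n + 1), catalan (2 * j) * catalan (2 * (n + 1 - 1 - j)) := by
    rw [sum_range_succ, add_tsub_cancel_right, Nat.sub_self, mul_zero]
    congr 1
    exact sum_congr rfl fun i hi => by rw [mem_range] at hi; congr 2; omega
  rw [show 2 * (n + 1) - 1 = 2 * n + 1 by omega, catalan_succ_eq_sum_range, sum_range_succ,
    sum_range_two_mul, sum_add_distrib, Nat.sub_self, hodd, ← heven]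
  ring

namespace Polynomial

variable {R : Type*} [CommSemiring R]

theorem coeff_pow_eq_zero_of_lt {p : R[X]} (hp : p.coeff 0 = 0) {n d : ℕ} (hd : d < n) :
    (p ^ n).coeff d = 0 := by
  obtain ⟨q, hq⟩ := pow_dvd_pow_of_dvd (X_dvd_iff.2 hp) n
  rw [hq, mul_comm, coeff_mul_X_pow', if_neg (not_le.2 hd)]

theorem coeff_geom_sum_of_lt {p : R[X]} (hp : p.coeff 0 = 0) {N d : ℕ} (hd : d < N) :
    (∑ n ∈ range N, p ^ n).coeff d = (1 + p * ∑ n ∈ range N, p ^ n).coeff d := by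
  have h : 1 + p * ∑ n ∈ range N, p ^ n = p ^ N + ∑ n ∈ range N, p ^ n := by
    rw [add_comm, ← geom_sum_succ, geom_sum_succ']
  rw [h, coeff_add, coeff_pow_eq_zero_of_lt hp hd, zero_add]

theorem coeff_geom_sum_sq_of_lt {p : R[X]} (hp : p.coeff 0 = 0) {N d : ℕ} (hd : d < N) :
    ((∑ n ∈ range N, p ^ n) ^ 2).coeff d = ∑ n ∈ range N, (n + 1) * (p ^ n).coeff d := by
  simp_rw [sq, sum_mul_sum, ← pow_add, finsetSum_coeff]
  rw [sum_range_sum_range_add fun s hs => coeff_pow_eq_zero_of_lt hp (hd.trans_le hs)]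
  simp only [nsmul_eq_mul, Nat.cast_add, Nat.cast_one]

theorem coeff_sum_C_mul_X_pow_pow {ι : Type*} [Fintype ι] [DecidableEq ι] (c : ι → R)
    (w : ι → ℕ) (n d : ℕ) :
    ((∑ i, C (c i) * X ^ w i) ^ n).coeff d =
      ∑ k ∈ (piAntidiag univ n).filter (fun k => ∑ i, w i * k i = d),
        (Nat.multinomial univ k : R) * ∏ i, c i ^ k i := by
  have hterm : ∀ k : ι → ℕ,
      ∏ i, (C (c i) * X ^ w i) ^ k i = C (∏ i, c i ^ k i) * X ^ ∑ i, w i * k i := by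
    intro k
    simp_rw [mul_pow, ← C_pow, ← pow_mul, prod_mul_distrib, ← map_prod, prod_pow_eq_pow_sum]
  simp_rw [sum_pow_eq_sum_piAntidiag, finsetSum_coeff, hterm, ← C_eq_natCast, ← mul_assoc,
    ← C_mul, coeff_C_mul_X_pow, sum_filter, eq_comm]

end Polynomial

theorem mem_weightedTuples {g : ℕ} {k : Fin (g - 1) → ℕ} :
    k ∈ weightedTuples g ↔ ∑ i, (i.1 + 1) * k i = g - 1 := by
  refine ⟨fun hk => (mem_filter.1 hk).2,
    fun hw => mem_filter.2 ⟨Fintype.mem_piFinset.2 fun i => ?_, hw⟩⟩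
  have hle : (i.1 + 1) * k i ≤ g - 1 :=
    hw.le.trans' (single_le_sum (f := fun j : Fin (g - 1) => (j.1 + 1) * k j)
      (fun _ _ => Nat.zero_le _) (mem_univ i))
  have := Nat.le_mul_of_pos_left (k i) (Nat.add_one_pos i.1)
  have := i.2
  rw [mem_range]
  omega

theorem sum_lt_of_mem_weightedTuples {g : ℕ} (hg : 1 ≤ g) {k : Fin (g - 1) → ℕ}
    (hk : k ∈ weightedTuples g) : ∑ i, k i < g := by
  have hle : ∑ i, k i ≤ ∑ i : Fin (g - 1), (i.1 + 1) * k i :=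
    sum_le_sum fun i _ => Nat.le_mul_of_pos_left _ i.1.succ_pos
  rw [mem_weightedTuples.1 hk] at hle
  omega

theorem weightedTuples_filter_sum_eq (g n : ℕ) :
    (weightedTuples g).filter (fun k => ∑ i, k i = n) =
      (piAntidiag univ n).filter (fun k => ∑ i : Fin (g - 1), (i.1 + 1) * k i = g - 1) := by
  ext k
  simp only [mem_filter, mem_weightedTuples, mem_piAntidiag, mem_univ, implies_true, true_and,
    and_comm]

theorem sum_weightedTuples_eq_coeff_geom_sum_sq {R : Type*} [CommSemiring R] {g : ℕ}
    (hg : 1 ≤ g) (c : Fin (g - 1) → R) :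
    ∑ k ∈ weightedTuples g,
        (Nat.multinomial univ k : R) * (((∑ i, k i : ℕ) : R) + 1) * ∏ i, c i ^ k i =
      ((∑ n ∈ range g, (∑ i, C (c i) * X ^ (i.1 + 1)) ^ n) ^ 2).coeff (g - 1) := by
  have hp : (∑ i : Fin (g - 1), C (c i) * X ^ (i.1 + 1)).coeff 0 = 0 := by
    simp [finsetSum_coeff]
  rw [coeff_geom_sum_sq_of_lt hp (by omega), ← sum_fiberwise_of_maps_to fun k hk =>
    mem_range.2 (sum_lt_of_mem_weightedTuples hg hk)]
  refine sum_congr rfl fun n _ => ?_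
  rw [coeff_sum_C_mul_X_pow_pow, ← weightedTuples_filter_sum_eq, mul_sum]
  refine sum_congr rfl fun k hk => ?_
  rw [(mem_filter.1 hk).2]
  ring

/-- `A(x)` truncated after degree `m`. -/
noncomputable def oddCatalanPoly (m : ℕ) : ℚ[X] :=
  ∑ i : Fin m, C (2 * catalan (2 * i.1 + 1) : ℚ) * X ^ (i.1 + 1)

theorem coeff_oddCatalanPoly_zero (m : ℕ) : (oddCatalanPoly m).coeff 0 = 0 := by
  simp [oddCatalanPoly, finsetSum_coeff]

theorem coeff_oddCatalanPoly_succ {m j : ℕ} (hj : j < m) :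
    (oddCatalanPoly m).coeff (j + 1) = 2 * catalan (2 * j + 1) := by
  rw [oddCatalanPoly, finsetSum_coeff, sum_eq_single ⟨j, hj⟩]
  · rw [coeff_C_mul_X_pow, if_pos rfl]
  · intro i _ hi
    rw [coeff_C_mul_X_pow, if_neg fun h => hi (Fin.ext (Nat.succ_injective h).symm)]
  · simp

theorem coeff_geom_sum_oddCatalanPoly {m N j : ℕ} (hjN : j < N) (hjm : j ≤ m) :
    (∑ n ∈ range N, oddCatalanPoly m ^ n).coeff j = catalan (2 * j) := by
  induction j using Nat.strong_induction_on with
  | _ j ih =>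
  rw [coeff_geom_sum_of_lt (coeff_oddCatalanPoly_zero m) hjN]
  cases j with
  | zero => simp [coeff_oddCatalanPoly_zero]
  | succ j =>
    rw [coeff_add, coeff_one, if_neg (by omega), zero_add, coeff_mul,
      Nat.sum_antidiagonal_eq_sum_range_succ_mk, sum_range_succ',
      coeff_oddCatalanPoly_zero, zero_mul, add_zero, mul_add_one, catalan_two_mul_add_two]
    push_cast
    rw [mul_sum]
    refine sum_congr rfl fun i hi => ?_
    rw [mem_range] at hi
    rw [coeff_oddCatalanPoly_succ (by omega), ih _ (by omega) (by omega) (by omega), mul_assoc]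

theorem sum_weightedTuples_catalan {g : ℕ} (hg : 1 ≤ g) :
    ∑ k ∈ weightedTuples g, (Nat.multinomial univ k : ℚ) * (((∑ i, k i : ℕ) : ℚ) + 1) *
        ∏ i : Fin (g - 1), (2 * catalan (2 * i.1 + 1) : ℚ) ^ k i =
      ∑ j ∈ range g, (catalan (2 * j) * catalan (2 * (g - 1 - j)) : ℚ) := by
  rw [sum_weightedTuples_eq_coeff_geom_sum_sq hg, ← oddCatalanPoly, sq, coeff_mul,
    Nat.sum_antidiagonal_eq_sum_range_succ_mk, Nat.succ_eq_add_one, Nat.sub_add_cancel hg]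
  refine sum_congr rfl fun j hj => ?_
  rw [mem_range] at hj
  rw [coeff_geom_sum_oddCatalanPoly hj (by omega),
    coeff_geom_sum_oddCatalanPoly (by omega) (by omega)]

def betaRecursion (β : ℕ → ℚ) (g : ℕ) : ℚ :=
  (1 / 2) * (∑ ℓ ∈ Ico 1 g, β ℓ * β (g - ℓ))
    + (1 / 2) * ∑ k ∈ weightedTuples g,
        (Nat.multinomial univ k : ℚ) * (((∑ i, k i : ℕ) : ℚ) + 1)
          * ∏ ℓ : Fin (g - 1), β (ℓ.1 + 1) ^ k ℓ

theorem betaRecursion_congr {β β' : ℕ → ℚ} {g : ℕ} (h : ∀ ℓ, 1 ≤ ℓ → ℓ < g → β ℓ = β' ℓ) :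
    betaRecursion β g = betaRecursion β' g := by
  have hprod : ∀ k : Fin (g - 1) → ℕ,
      ∏ ℓ : Fin (g - 1), β (ℓ.1 + 1) ^ k ℓ = ∏ ℓ : Fin (g - 1), β' (ℓ.1 + 1) ^ k ℓ :=
    fun k => prod_congr rfl fun ℓ _ => by rw [h _ (by omega) (by omega)]
  unfold betaRecursion
  simp_rw [hprod]
  congr 2
  refine sum_congr rfl fun ℓ hℓ => ?_
  rw [mem_Ico] at hℓ
  rw [h ℓ hℓ.1 hℓ.2, h (g - ℓ) (by omega) (by omega)]

theorem eq_of_betaRecursion {β β' : ℕ → ℚ} (h1 : β 1 = β' 1)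
    (hβ : ∀ g, 2 ≤ g → β g = betaRecursion β g)
    (hβ' : ∀ g, 2 ≤ g → β' g = betaRecursion β' g) :
    ∀ g, 1 ≤ g → β g = β' g := by
  intro g
  induction g using Nat.strong_induction_on with
  | _ g ih =>
  intro hg
  obtain rfl | hg2 := hg.eq_or_lt
  · exact h1
  · rw [hβ g hg2, hβ' g hg2, betaRecursion_congr fun ℓ hℓ hℓg => ih ℓ hℓg hℓ]

def scaledCatalan (g : ℕ) : ℚ := 2 * catalan (2 * g - 1) / 4 ^ g

theorem scaledCatalan_succ (n : ℕ) :
    scaledCatalan (n + 1) = 2 * catalan (2 * n + 1) / 4 ^ (n + 1) := by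
  rw [scaledCatalan, show 2 * (n + 1) - 1 = 2 * n + 1 by omega]

theorem scaledCatalan_betaRecursion {g : ℕ} (hg : 2 ≤ g) :
    scaledCatalan g = betaRecursion scaledCatalan g := by
  have hpairs : ∑ ℓ ∈ Ico 1 g, scaledCatalan ℓ * scaledCatalan (g - ℓ) =
      4 * (∑ ℓ ∈ Ico 1 g, catalan (2 * ℓ - 1) * catalan (2 * (g - ℓ) - 1) : ℕ) / 4 ^ g := by
    push_cast
    rw [mul_sum, sum_div]
    refine sum_congr rfl fun ℓ hℓ => ?_
    rw [mem_Ico] at hℓ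
    rw [scaledCatalan, scaledCatalan, ← Nat.add_sub_cancel' hℓ.2.le, pow_add,
      Nat.add_sub_cancel_left]
    field_simp
    ring
  have htuples : ∑ k ∈ weightedTuples g,
      (Nat.multinomial univ k : ℚ) * (((∑ i, k i : ℕ) : ℚ) + 1) *
        ∏ ℓ : Fin (g - 1), scaledCatalan (ℓ.1 + 1) ^ k ℓ =
      (∑ j ∈ range g, catalan (2 * j) * catalan (2 * (g - 1 - j)) : ℕ) / 4 ^ (g - 1) := by
    push_cast
    rw [← sum_weightedTuples_catalan (by omega), sum_div]
    refine sum_congr rfl fun k hk => ?_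
    have hden : (4 : ℚ) ^ (g - 1) = ∏ i : Fin (g - 1), (4 ^ (i.1 + 1)) ^ k i := by
      simp_rw [← pow_mul, prod_pow_eq_pow_sum, mem_weightedTuples.1 hk]
    simp_rw [hden, scaledCatalan_succ, div_pow, prod_div_distrib]
    push_cast
    ring
  have hpow : (4 : ℚ) ^ g = 4 ^ (g - 1) * 4 := by
    rw [← pow_succ, Nat.sub_add_cancel (by omega)]
  rw [betaRecursion, hpairs, htuples, scaledCatalan, catalan_two_mul_sub_one (by omega), hpow]
  push_cast
  field_simp
  ring

theorem two_pow_mul_scaledCatalan {g : ℕ} (hg : 1 ≤ g) :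
    2 ^ (2 * g - 1) * scaledCatalan g = catalan (2 * g - 1) := by
  obtain ⟨n, rfl⟩ : ∃ n, g = n + 1 := ⟨g - 1, by omega⟩
  rw [scaledCatalan_succ, show 2 * (n + 1) - 1 = 2 * n + 1 by omega, pow_succ, pow_mul]
  field_simp
  ring

/-- If `β 1 = 1/2` and, for `g ≥ 2`,
`β g = (1/2)·Σ_{ℓ=1}^{g−1} β_ℓ β_{g−ℓ}
      + (1/2)·Σ_{k_1+2k_2+…+(g−1)k_{g−1}=g−1} multinomial(k)·(Σ k_ℓ + 1)·Π β_ℓ^{k_ℓ}`,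
then `2^{2g−1}·β_g = C_{2g−1}` for all `g ≥ 1`. -/
theorem stmt0 (β : ℕ → ℚ)
    (hβ1 : β 1 = 1 / 2)
    (hrec : ∀ g, 2 ≤ g →
      β g = (1 / 2) * (∑ ℓ ∈ Finset.Ico 1 g, β ℓ * β (g - ℓ))
        + (1 / 2) * ∑ k ∈ weightedTuples g,
            (Nat.multinomial Finset.univ k : ℚ) * (((∑ i, k i : ℕ) : ℚ) + 1)
              * ∏ ℓ : Fin (g - 1), β (ℓ.1 + 1) ^ k ℓ) :
    ∀ g, 1 ≤ g → 2 ^ (2 * g - 1) * β g = catalan (2 * g - 1) := by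
  have hβ : ∀ g, 1 ≤ g → β g = scaledCatalan g :=
    eq_of_betaRecursion (by rw [hβ1, scaledCatalan]; norm_num) hrec
      fun g hg => scaledCatalan_betaRecursion hg
  intro g hg
  rw [hβ g hg, two_pow_mul_scaledCatalan hg]
end

section
/- Let D ∈ ℚ[[X]] be the formal power series whose coefficient of X^n is the Catalan number C_n when n is odd and 0 when n is even (the odd part of the Catalan generating function). Then D satisfies the functional equation D·(1 − 2XD)^2 = (X + X·D^2)·(1 − 2XD)^2 + 2X^2·D·(1 − 2XD) + 2X^2·D, i.e., the identity obtained by clearing denominators in D = X + X·D^2 + 2X^2·D/(1−2XD)^2 + 2X^2·D/(1−2XD). -/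
open PowerSeries

noncomputable def catalanOdd : PowerSeries ℚ :=
  PowerSeries.mk fun n => if Odd n then (catalan n : ℚ) else 0

/-!
With `F(X) = ∑ Cₙ Xⁿ` and `G(X) = F(-X)` we have `F = 1 + X F²`, `G = 1 - X G²` and
`F - G = 2D`. Adding the two quadratic equations gives `(F + G)(1 - 2XD) = 2`, subtracting them
gives `4D = X (F + G)² + 4XD²`; multiplying the latter by `(1 - 2XD)²` eliminates `F + G` and
leaves `D (1 - 2XD)² = X D² (1 - 2XD)² + X`, which is the claimed identity after expansion.
-/

local notation "𝒞" => catalanSeries.map (Nat.castRingHom ℚ)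

theorem odd_part_equation {R : Type*} [CommRing R] (h2 : IsUnit (2 : R)) {x f g d : R}
    (hf : f = 1 + x * f ^ 2) (hg : g = 1 - x * g ^ 2) (hd : f - g = 2 * d) :
    d * (1 - 2 * x * d) ^ 2 = x * d ^ 2 * (1 - 2 * x * d) ^ 2 + x := by
  have hs : (f + g) * (1 - 2 * x * d) = 2 := by
    linear_combination hf + hg + x * (f + g) * hd
  have h4 : 4 * d = x * (f + g) ^ 2 + 4 * x * d ^ 2 := by
    linear_combination 2 * hf - 2 * hg - (2 - x * (f - g + 2 * d)) * hd
  refine (h2.mul h2).mul_left_cancel ?_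
  linear_combination (1 - 2 * x * d) ^ 2 * h4 + x * ((f + g) * (1 - 2 * x * d) + 2) * hs

theorem map_catalanSeries_eq : 𝒞 = 1 + X * 𝒞 ^ 2 := by
  have h := congrArg (map (Nat.castRingHom ℚ)) catalanSeries_sq_mul_X_add_one
  simp only [map_add, map_mul, map_pow, map_X, map_one] at h
  linear_combination -h

theorem evalNegHom_map_catalanSeries_eq : evalNegHom 𝒞 = 1 - X * evalNegHom 𝒞 ^ 2 := by
  conv_lhs => rw [map_catalanSeries_eq]
  simp only [map_add, map_mul, map_pow, map_one, evalNegHom_X]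
  ring

theorem map_catalanSeries_sub_evalNegHom : 𝒞 - evalNegHom 𝒞 = 2 * catalanOdd := by
  ext n
  rw [evalNegHom, map_sub, coeff_rescale, show (2 : ℚ⟦X⟧) = C 2 from rfl]
  simp only [coeff_map, catalanSeries_coeff, coeff_C_mul, catalanOdd, coeff_mk, eq_natCast]
  rcases Nat.even_or_odd n with hn | hn
  · simp [hn.neg_one_pow, Nat.not_odd_iff_even.mpr hn]
  · simp only [hn.neg_one_pow, hn, if_true]
    ring

/-- `D` satisfies `D·(1−2XD)² = (X + X·D²)·(1−2XD)² + 2X²·D·(1−2XD) + 2X²·D`, the identity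
obtained by clearing denominators in `D = X + X·D² + 2X²·D/(1−2XD)² + 2X²·D/(1−2XD)`. -/
theorem stmt1 :
    catalanOdd * (1 - 2 * X * catalanOdd) ^ 2
      = (X + X * catalanOdd ^ 2) * (1 - 2 * X * catalanOdd) ^ 2
        + 2 * X ^ 2 * catalanOdd * (1 - 2 * X * catalanOdd)
        + 2 * X ^ 2 * catalanOdd := by
  have h2 : IsUnit (2 : ℚ⟦X⟧) := by
    simpa only [map_ofNat] using (Ne.isUnit (two_ne_zero (α := ℚ))).map (C (R := ℚ))
  have key := odd_part_equation h2 map_catalanSeries_eq evalNegHom_map_catalanSeries_eq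
    map_catalanSeries_sub_evalNegHom
  linear_combination key
end

section
/- Let Ẽ : ℕ × ℕ → ℚ be defined by Ẽ(1,0) = 1, Ẽ(1,g) = 0 for g ≥ 1, Ẽ(0,g) = 0 for all g, and for n ≥ 2 and all g ≥ 0: Ẽ(n,g) = (1/2)·[ Σ over compositions (c_1,c_2) of n into 2 parts and compositions (d_1,d_2) of g+2 into 2 parts of Ẽ(c_1,d_1−1)·Ẽ(c_2,d_2−1) + (if n and g are both even then Ẽ(n/2,g/2) else 0) + Σ_{k=3}^{n} (k−2)·Σ over compositions (c_1,…,c_k) of n into k parts and compositions (d_1,…,d_k) of g−1+k into k parts of Π_{i=1}^{k} Ẽ(c_i,d_i−1) + Σ_{a=1}^{⌊(n−1)/2⌋} Σ over palindromic compositions (c_1,…,c_{2a+1}) of n into 2a+1 parts and palindromic compositions (d_1,…,d_{2a+1}) of g+2a into 2a+1 parts of Π_{i=1}^{a+1} Ẽ(c_i,d_i−1) ] + Σ_{k=2}^{n} Σ over compositions (c_1,…,c_k) of n into k parts and compositions (d_1,…,d_k) of g−1+k into k parts of Π_{i=1}^{k} Ẽ(c_i,d_i−1). (This recursion counts unlabeled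 general galled trees with n leaves and g galls.) Then for every n ≥ 1, Ẽ(n, n−1) = C_{n−1}, the (n−1)-st Catalan number. -/
open Finset

/-! If a composition `c` of `n` into at least two parts is paired with a composition `d` of a
larger number, then `c_i < d_i` for some `i` (for palindromic pairs, some `i` in the first half),
so that factor `Ẽ(c_i, d_i − 1)` has `c_i ≤ d_i − 1` and `c_i < n`. By strong induction on `n`
this, together with `n / 2 ≤ g / 2`, gives `Ẽ(n, g) = 0` whenever `n ≤ g`. For `g = n − 1` every
sum in the recursion is of this kind except the two-part sum over pairs `d = c`, and the term
`Ẽ(n / 2, g / 2)` is absent because `n` and `n − 1` have different parities; what remains is the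
Catalan convolution `∑_{i+j=n−2} C_i C_j`. -/

/-- The compositions of `a` into `b` (positive) parts, as functions `Fin b → ℕ`.
Every part of a composition of `a` lies in `[1, a]`, so filtering inside
`Finset.Icc 1 a` captures all compositions. -/
def compositions (a b : ℕ) : Finset (Fin b → ℕ) :=
  (Fintype.piFinset fun _ => Finset.Icc 1 a).filter fun c => ∑ i, c i = a

/-- The palindromic compositions of `a` into `b` parts: compositions with `c i = c (b+1−i)`. -/
def palCompositions (a b : ℕ) : Finset (Fin b → ℕ) :=
  (compositions a b).filter fun c => ∀ i, c i = c i.rev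

theorem mem_compositions {a k : ℕ} {c : Fin k → ℕ} :
    c ∈ compositions a k ↔ (∀ i, 0 < c i) ∧ ∑ i, c i = a := by
  simp only [compositions, mem_filter, Fintype.mem_piFinset, mem_Icc]
  refine ⟨fun h => ⟨fun i => (h.1 i).1, h.2⟩, fun ⟨hpos, hsum⟩ => ⟨fun i => ⟨hpos i, ?_⟩, hsum⟩⟩
  exact hsum ▸ single_le_sum (fun j _ => Nat.zero_le (c j)) (mem_univ i)

theorem lt_of_mem_compositions {a k : ℕ} {c : Fin k → ℕ} (hc : c ∈ compositions a k)
    (hk : 2 ≤ k) (i : Fin k) : c i < a := by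
  obtain ⟨hpos, rfl⟩ := mem_compositions.1 hc
  have : Nontrivial (Fin k) := Fin.nontrivial_iff_two_le.2 hk
  obtain ⟨j, hji⟩ := exists_ne i
  calc c i < c i + c j := Nat.lt_add_of_pos_right (hpos j)
    _ ≤ ∑ l, c l := add_le_sum (fun _ _ => Nat.zero_le _) (mem_univ i) (mem_univ j) hji.symm

theorem exists_lt_of_sum_le_of_ne {ι M : Type*} [Fintype ι] [AddCommMonoid M] [LinearOrder M]
    [IsOrderedCancelAddMonoid M] {c d : ι → M} (hle : ∑ i, c i ≤ ∑ i, d i) (hne : c ≠ d) :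
    ∃ i, c i < d i := by
  by_contra! hdc
  obtain ⟨i, hi⟩ := Function.ne_iff.1 hne
  exact (sum_lt_sum (fun i _ => hdc i) ⟨i, mem_univ i, (hdc i).lt_of_ne' hi⟩).not_ge hle

theorem exists_lt_of_mem_compositions_of_lt {a b k : ℕ} {c d : Fin k → ℕ}
    (hc : c ∈ compositions a k) (hd : d ∈ compositions b k) (hab : a < b) : ∃ i, c i < d i := by
  have hsum := (mem_compositions.1 hc).2.trans_lt (hab.trans_eq (mem_compositions.1 hd).2.symm)
  exact exists_lt_of_sum_le_of_ne hsum.le fun h => hsum.ne (by rw [h])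

theorem succ_le_two_mul_add_one (m : ℕ) : m + 1 ≤ 2 * m + 1 :=
  Nat.add_le_add_right (Nat.le_mul_of_pos_left m two_pos) 1

theorem exists_lt_of_mem_palCompositions {a b m : ℕ} {c d : Fin (2 * m + 1) → ℕ}
    (hc : c ∈ palCompositions a (2 * m + 1)) (hd : d ∈ palCompositions b (2 * m + 1))
    (hab : a < b) :
    ∃ i : Fin (m + 1), c (Fin.castLE (by omega) i) < d (Fin.castLE (by omega) i) := by
  simp only [palCompositions, mem_filter] at hc hd
  obtain ⟨i, hi⟩ := exists_lt_of_mem_compositions_of_lt hc.1 hd.1 hab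
  -- by symmetry, `i` or its mirror image lies in the first half
  by_cases him : i.val ≤ m
  · exact ⟨⟨i, by omega⟩, hi⟩
  · refine ⟨⟨i.rev, by simp only [Fin.val_rev]; omega⟩, ?_⟩
    simpa only [Fin.castLE_mk, Fin.eta, ← hc.2 i, ← hd.2 i] using hi

section Vanishing

variable {R : Type*} [CommSemiring R] (E : ℕ → ℕ → R)

theorem sum_compositions_prod_eq_zero {a b k : ℕ}
    (hE : ∀ m h, m < a → m ≤ h → E m h = 0) (hk : 2 ≤ k) (hab : a < b) :
    ∑ c ∈ compositions a k, ∑ d ∈ compositions b k, ∏ i, E (c i) (d i - 1) = 0 := by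
  refine sum_eq_zero fun c hc => sum_eq_zero fun d hd => ?_
  obtain ⟨i, hi⟩ := exists_lt_of_mem_compositions_of_lt hc hd hab
  exact prod_eq_zero (mem_univ i) (hE _ _ (lt_of_mem_compositions hc hk i) (by omega))

theorem sum_palCompositions_prod_eq_zero {a b m : ℕ}
    (hE : ∀ m' h, m' < a → m' ≤ h → E m' h = 0) (hm : 1 ≤ m) (hab : a < b) :
    ∑ c ∈ palCompositions a (2 * m + 1), ∑ d ∈ palCompositions b (2 * m + 1),
      ∏ i : Fin (m + 1),
        E (c (Fin.castLE (by omega) i)) (d (Fin.castLE (by omega) i) - 1) = 0 := by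
  refine sum_eq_zero fun c hc => sum_eq_zero fun d hd => ?_
  obtain ⟨i, hi⟩ := exists_lt_of_mem_palCompositions hc hd hab
  exact prod_eq_zero (mem_univ i)
    (hE _ _ (lt_of_mem_compositions (mem_filter.1 hc).1 (by omega) _) (by omega))

theorem sum_compositions_prod_eq_sum_diag (hE : ∀ m h, m ≤ h → E m h = 0) (a k : ℕ) :
    ∑ c ∈ compositions a k, ∑ d ∈ compositions a k, ∏ i, E (c i) (d i - 1) =
      ∑ c ∈ compositions a k, ∏ i, E (c i) (c i - 1) := by
  refine sum_congr rfl fun c hc => sum_eq_single_of_mem c hc fun d hd hdc => ?_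
  have hsum := (mem_compositions.1 hc).2.trans (mem_compositions.1 hd).2.symm
  obtain ⟨i, hi⟩ := exists_lt_of_sum_le_of_ne hsum.le hdc.symm
  have := (mem_compositions.1 hd).1 i
  exact prod_eq_zero (mem_univ i) (hE _ _ (by omega))

end Vanishing

theorem sum_compositions_two {M : Type*} [AddCommMonoid M] (n : ℕ) (f : ℕ → ℕ → M) :
    ∑ c ∈ compositions (n + 2) 2, f (c 0) (c 1) = ∑ p ∈ antidiagonal n, f (p.1 + 1) (p.2 + 1) := by
  refine sum_nbij' (fun c => (c 0 - 1, c 1 - 1)) (fun p => ![p.1 + 1, p.2 + 1])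
    ?_ ?_ ?_ ?_ ?_
  · intro c hc
    obtain ⟨hpos, hsum⟩ := mem_compositions.1 hc
    have := hpos 0; have := hpos 1
    simp only [Fin.sum_univ_two] at hsum
    simp only [HasAntidiagonal.mem_antidiagonal]
    omega
  · intro p hp
    simp only [HasAntidiagonal.mem_antidiagonal] at hp
    simp only [mem_compositions, Fin.forall_fin_two, Fin.sum_univ_two, Matrix.cons_val_zero,
      Matrix.cons_val_one]
    omega
  · intro c hc
    obtain ⟨hpos, -⟩ := mem_compositions.1 hc
    have := hpos 0; have := hpos 1
    ext i; fin_cases i <;> simp <;> omega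
  · intro p _
    simp
  · intro c hc
    obtain ⟨hpos, -⟩ := mem_compositions.1 hc
    simp only [Nat.sub_add_cancel (hpos 0), Nat.sub_add_cancel (hpos 1)]

def GalledTreeRecursion (E : ℕ → ℕ → ℚ) : Prop :=
  ∀ n g, 2 ≤ n →
      E n g = (1 / 2) *
        ((∑ c ∈ compositions n 2, ∑ d ∈ compositions (g + 2) 2,
            ∏ i : Fin 2, E (c i) (d i - 1))
         + (if Even n ∧ Even g then E (n / 2) (g / 2) else 0)
         + (∑ k ∈ Finset.Icc 3 n, ((k : ℚ) - 2) *
             ∑ c ∈ compositions n k, ∑ d ∈ compositions (g + k - 1) k,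
               ∏ i : Fin k, E (c i) (d i - 1))
         + (∑ a ∈ Finset.Icc 1 ((n - 1) / 2),
             ∑ c ∈ palCompositions n (2 * a + 1),
               ∑ d ∈ palCompositions (g + 2 * a) (2 * a + 1),
                 ∏ i : Fin (a + 1),
                   E (c (Fin.castLE (succ_le_two_mul_add_one a) i))
                     (d (Fin.castLE (succ_le_two_mul_add_one a) i) - 1)))
      + (∑ k ∈ Finset.Icc 2 n, ∑ c ∈ compositions n k, ∑ d ∈ compositions (g + k - 1) k,
          ∏ i : Fin k, E (c i) (d i - 1))

namespace GalledTreeRecursion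

variable {E : ℕ → ℕ → ℚ}

theorem eq_of_le_succ (hrec : GalledTreeRecursion E) {n g : ℕ}
    (hE : ∀ m h, m < n → m ≤ h → E m h = 0) (hn : 2 ≤ n) (hng : n ≤ g + 1) :
    E n g = 1 / 2 * (if Even n ∧ Even g then E (n / 2) (g / 2) else 0) +
      ∑ c ∈ compositions n 2, ∑ d ∈ compositions (g + 1) 2, ∏ i, E (c i) (d i - 1) := by
  have hconv : ∀ k b, 2 ≤ k → n < b →
      ∑ c ∈ compositions n k, ∑ d ∈ compositions b k, ∏ i, E (c i) (d i - 1) = 0 :=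
    fun k b => sum_compositions_prod_eq_zero E hE
  rw [hrec n g hn, hconv 2 _ le_rfl (by omega),
    sum_eq_zero fun k hk => by rw [hconv k _ (by grind) (by grind), mul_zero],
    sum_eq_zero fun a ha => sum_palCompositions_prod_eq_zero E hE (mem_Icc.1 ha).1 (by grind),
    sum_eq_single_of_mem 2 (mem_Icc.2 ⟨le_rfl, hn⟩) fun k hk hk2 =>
      hconv k _ (by grind) (by grind)]
  simp only [zero_add, add_zero]
  rfl

theorem eq_zero_of_le (hrec : GalledTreeRecursion E) (h1g : ∀ g, 1 ≤ g → E 1 g = 0)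
    (h0g : ∀ g, E 0 g = 0) (n g : ℕ) (hng : n ≤ g) : E n g = 0 := by
  induction n using Nat.strong_induction_on generalizing g with
  | _ n ih =>
  match n, hng with
  | 0, _ => exact h0g g
  | 1, hg => exact h1g g hg
  | n + 2, hng =>
    have hE : ∀ m h, m < n + 2 → m ≤ h → E m h = 0 := fun m h hm hmh => ih m hm h hmh
    rw [hrec.eq_of_le_succ hE (by omega) (by omega),
      hE _ _ (by omega) (Nat.div_le_div_right hng),
      sum_compositions_prod_eq_zero E hE le_rfl (by omega)]
    simp

end GalledTreeRecursion

/-- If `Ẽ : ℕ × ℕ → ℚ` satisfies `Ẽ(1,0)=1`, `Ẽ(1,g)=0` for `g ≥ 1`, `Ẽ(0,g)=0`, and for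
`n ≥ 2` the recursion counting unlabeled general galled trees with `n` leaves and `g` galls,
then `Ẽ(n, n−1) = C_{n−1}` for all `n ≥ 1`. -/
theorem stmt9 (E : ℕ → ℕ → ℚ)
    (h10 : E 1 0 = 1)
    (h1g : ∀ g, 1 ≤ g → E 1 g = 0)
    (h0g : ∀ g, E 0 g = 0)
    (hrec : ∀ n g, 2 ≤ n →
      E n g = (1 / 2) *
        ((∑ c ∈ compositions n 2, ∑ d ∈ compositions (g + 2) 2,
            ∏ i : Fin 2, E (c i) (d i - 1))
         + (if Even n ∧ Even g then E (n / 2) (g / 2) else 0)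
         + (∑ k ∈ Finset.Icc 3 n, ((k : ℚ) - 2) *
             ∑ c ∈ compositions n k, ∑ d ∈ compositions (g + k - 1) k,
               ∏ i : Fin k, E (c i) (d i - 1))
         + (∑ a ∈ Finset.Icc 1 ((n - 1) / 2),
             ∑ c ∈ palCompositions n (2 * a + 1),
               ∑ d ∈ palCompositions (g + 2 * a) (2 * a + 1),
                 ∏ i : Fin (a + 1),
                   E (c (Fin.castLE (by omega) i)) (d (Fin.castLE (by omega) i) - 1)))
      + (∑ k ∈ Finset.Icc 2 n, ∑ c ∈ compositions n k, ∑ d ∈ compositions (g + k - 1) k,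
          ∏ i : Fin k, E (c i) (d i - 1))) :
    ∀ n, 1 ≤ n → E n (n - 1) = catalan (n - 1) := by
  have hvan := GalledTreeRecursion.eq_zero_of_le hrec h1g h0g
  intro n hn
  induction n using Nat.strong_induction_on with
  | _ n ih =>
  rcases n with _ | _ | n
  · omega
  · simpa using h10
  have hodd : ¬(Even (n + 2) ∧ Even (n + 2 - 1)) := by grind
  rw [GalledTreeRecursion.eq_of_le_succ hrec (fun m h _ => hvan m h) le_add_self (by omega),
    if_neg hodd, Nat.sub_add_cancel (by omega), sum_compositions_prod_eq_sum_diag E hvan]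
  simp only [Fin.prod_univ_two, mul_zero, zero_add]
  rw [sum_compositions_two n fun x y => E x (x - 1) * E y (y - 1),
    show n + 2 - 1 = n + 1 from rfl, catalan_succ']
  push_cast
  refine sum_congr rfl fun p hp => ?_
  have hsum := mem_antidiagonal.1 hp
  exact congr_arg₂ (· * ·) (ih (p.1 + 1) (by omega) le_add_self)
    (ih (p.2 + 1) (by omega) le_add_self)
end

section
/- Let f : ℝ → ℝ be given by f(t) = t·(1 − √(1−2t))^2 / (2·(1−2t)^{3/2}) for t < 1/2. Then the sequence n ↦ f^{(n)}(0) of iterated derivatives of f at 0 is asymptotically equivalent, as n → ∞, to the sequence n ↦ (1/(2√π))·n^{1/2}·2^n·n!. (The quantity f^{(n)}(0) equals the number e¹_{n,1} of leaf-labeled simplex time-consistent galled trees with n leaves and exactly one gall.) -/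
/-!
For `t < 1/2` put `u = √(1 - 2t)`; then `t = (1 - u²)/2` and
`f13 t = 1/2 + u⁻³/4 - u/4 - u⁻²/2`, a combination of powers of `1 - 2t`. Differentiating
`(1 - 2t)^r` `n` times at `0` gives `2ⁿ (-r)ₙ` (rising factorial), so
`f13⁽ⁿ⁾(0) = 2ⁿ/4 · ((3/2)ₙ - (-1/2)ₙ - 2·n!)` for `n ≥ 1`. Euler's limit formula for `Γ`
gives `(3/2)ₙ ~ n^{1/2} n!/Γ(3/2) = 2 n^{1/2} n!/√π`, while `(-1/2)ₙ` and `n!` are smaller by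
factors of order `n⁻²` and `n^{-1/2}`.
-/

/-- The exponential generating function `𝔈₁¹(t) = t·𝔘(t)²/(2(1−𝔘(t))³)` with
`𝔘(t) = 1 − √(1−2t)`, i.e. `f(t) = t·(1 − √(1−2t))² / (2·(1−2t)^{3/2})`. -/
noncomputable def f13 : ℝ → ℝ := fun t =>
  t * (1 - Real.sqrt (1 - 2 * t)) ^ 2 / (2 * (1 - 2 * t) ^ ((3 : ℝ) / 2))

open Real Filter Asymptotics Polynomial Topology

theorem iteratedDeriv_sub_mul_rpow (a b r : ℝ) (n : ℕ) {x : ℝ} (hx : a - b * x ≠ 0) :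
    iteratedDeriv n (fun y => (a - b * y) ^ r) x
      = b ^ n * (ascPochhammer ℝ n).eval (-r) * (a - b * x) ^ (r - n) := by
  induction n generalizing x with
  | zero => simp
  | succ n ih =>
    have hopen : IsOpen {y : ℝ | a - b * y ≠ 0} :=
      isOpen_ne_fun (by fun_prop) continuous_const
    have hev : iteratedDeriv n (fun y => (a - b * y) ^ r)
        =ᶠ[𝓝 x] fun y => b ^ n * (ascPochhammer ℝ n).eval (-r) * (a - b * y) ^ (r - n) :=
      eventually_of_mem (hopen.mem_nhds hx) fun y hy => ih hy
    have hderiv : HasDerivAt (fun y => a - b * y) (-b) x := by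
      simpa using ((hasDerivAt_id x).const_mul b).const_sub a
    rw [iteratedDeriv_succ, hev.deriv_eq,
      ((hderiv.rpow_const (p := r - n) (Or.inl hx)).const_mul _).deriv,
      ascPochhammer_succ_eval]
    push_cast
    ring_nf

theorem ascPochhammer_eval_mul_eq_mul_eval_add_two {R : Type*} [CommSemiring R] (s : R) (n : ℕ) :
    (ascPochhammer R n).eval s * ((s + n) * (s + n + 1))
      = s * (s + 1) * (ascPochhammer R n).eval (s + 2) := by
  have h₁ := congrArg (eval s) (ascPochhammer_mul R n 2)
  have h₂ := congrArg (eval s) (ascPochhammer_mul R 2 n)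
  rw [add_comm 2 n] at h₂
  simp only [eval_mul, eval_comp, eval_add, eval_X, eval_natCast] at h₁ h₂
  rw [← h₂] at h₁
  simpa [ascPochhammer_succ_eval, add_assoc, one_add_one_eq_two] using h₁

theorem f13_eq_of_lt_half {t : ℝ} (ht : t < 1 / 2) :
    f13 t = 1 / 2 + (1 / 4 * (1 - 2 * t) ^ (-3 / 2 : ℝ) - 1 / 4 * (1 - 2 * t) ^ (1 / 2 : ℝ)
      - 1 / 2 * (1 - 2 * t) ^ (-1 : ℝ)) := by
  have hs : 0 < 1 - 2 * t := by linarith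
  set u := √(1 - 2 * t) with hu
  have hu0 : 0 < u := sqrt_pos.mpr hs
  have hu2 : u ^ 2 = 1 - 2 * t := sq_sqrt hs.le
  have h32 : (1 - 2 * t) ^ (3 / 2 : ℝ) = (1 - 2 * t) * u := by
    rw [show (3 / 2 : ℝ) = 1 + 1 / 2 by norm_num, rpow_add hs, rpow_one, ← sqrt_eq_rpow]
  rw [f13, show (-3 / 2 : ℝ) = -(3 / 2) by norm_num, rpow_neg hs.le, h32, ← sqrt_eq_rpow,
    rpow_neg_one, ← hu, ← hu2]
  have ht' : t = (1 - u ^ 2) / 2 := by linarith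
  rw [ht']
  field_simp
  ring

theorem iteratedDeriv_f13_zero {n : ℕ} (hn : n ≠ 0) :
    iteratedDeriv n f13 0 = 2 ^ n / 4 * ((ascPochhammer ℝ n).eval (3 / 2)
      - (ascPochhammer ℝ n).eval (-1 / 2) - 2 * n.factorial) := by
  have hev : f13 =ᶠ[𝓝 0] fun t => 1 / 2 + (1 / 4 * (1 - 2 * t) ^ (-3 / 2 : ℝ)
      - 1 / 4 * (1 - 2 * t) ^ (1 / 2 : ℝ) - 1 / 2 * (1 - 2 * t) ^ (-1 : ℝ)) :=
    eventually_of_mem (Iio_mem_nhds (by norm_num)) fun t ht => f13_eq_of_lt_half ht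
  have hterm (c r : ℝ) : ContDiffAt ℝ n (fun t : ℝ => c * (1 - 2 * t) ^ r) 0 :=
    contDiffAt_const.mul <|
      (contDiffAt_const.sub (contDiffAt_const.mul contDiffAt_id)).rpow_const_of_ne (by norm_num)
  rw [hev.iteratedDeriv_eq, iteratedDeriv_const_add (Nat.pos_of_ne_zero hn),
    iteratedDeriv_fun_sub ((hterm _ _).sub (hterm _ _)) (hterm _ _),
    iteratedDeriv_fun_sub (hterm _ _) (hterm _ _)]
  simp only [iteratedDeriv_const_mul_field,
    iteratedDeriv_sub_mul_rpow 1 2 _ _ (show (1 : ℝ) - 2 * 0 ≠ 0 by norm_num)]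
  norm_num
  ring

theorem ascPochhammer_eval_eq_prod_range {R : Type*} [CommSemiring R] (n : ℕ) (r : R) :
    (ascPochhammer R n).eval r = ∏ j ∈ Finset.range n, (r + j) := by
  induction n with
  | zero => simp
  | succ n ih => rw [ascPochhammer_succ_eval, ih, Finset.prod_range_succ]

theorem isEquivalent_ascPochhammer_eval {s : ℝ} (hs : 0 < s) :
    (fun n : ℕ => (ascPochhammer ℝ n).eval (s + 1))
      ~[atTop] fun n => (n : ℝ) ^ s * n.factorial / Gamma (s + 1) := by
  have hΓ : Gamma (s + 1) = s * Gamma s := Gamma_add_one hs.ne'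
  have hΓpos : 0 < s * Gamma s := mul_pos hs (Gamma_pos_of_pos hs)
  have hlim : Tendsto (fun n => Gamma (s + 1) / (s * GammaSeq s n)) atTop (𝓝 1) := by
    have := tendsto_const_nhds (x := Gamma (s + 1)) |>.div
      ((GammaSeq_tendsto_Gamma s).const_mul s) hΓpos.ne'
    rwa [← hΓ, div_self (hΓ ▸ hΓpos.ne')] at this
  refine isEquivalent_iff_exists_eq_mul.mpr ⟨_, hlim, ?_⟩
  filter_upwards [eventually_ne_atTop 0] with n hn
  have hprod : ∏ j ∈ Finset.range (n + 1), (s + j) = s * (ascPochhammer ℝ n).eval (s + 1) := by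
    rw [← ascPochhammer_eval_eq_prod_range, ascPochhammer_succ_left]
    simp
  have hpos : 0 < (ascPochhammer ℝ n).eval (s + 1) := ascPochhammer_pos n _ (by linarith)
  have hpow : 0 < (n : ℝ) ^ s := rpow_pos_of_pos (by positivity) s
  simp only [Pi.mul_apply, GammaSeq, hprod]
  field_simp

theorem isLittleO_ascPochhammer_eval_add_two (s : ℝ) :
    (fun n : ℕ => (ascPochhammer ℝ n).eval s) =o[atTop] fun n => (ascPochhammer ℝ n).eval (s + 2) := by
  have hgrow : Tendsto (fun n : ℕ => (s + n) * (s + n + 1)) atTop atTop := by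
    have h := tendsto_atTop_add_const_left atTop s tendsto_natCast_atTop_atTop
    exact h.atTop_mul_atTop₀ (tendsto_atTop_add_const_right atTop 1 h)
  refine isLittleO_iff_exists_eq_mul.mpr ⟨_, hgrow.const_div_atTop (s * (s + 1)), ?_⟩
  filter_upwards [hgrow.eventually_ne_atTop 0] with n hn
  rw [Pi.mul_apply, div_mul_eq_mul_div, eq_div_iff hn, ascPochhammer_eval_mul_eq_mul_eval_add_two]

theorem isEquivalent_ascPochhammer_three_halves_sub :
    (fun n : ℕ => (ascPochhammer ℝ n).eval (3 / 2) - (ascPochhammer ℝ n).eval (-1 / 2)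
      - 2 * n.factorial) ~[atTop] fun n => (n : ℝ) ^ (1 / 2 : ℝ) * n.factorial / Gamma (3 / 2) := by
  set G : ℕ → ℝ := fun n => (n : ℝ) ^ (1 / 2 : ℝ) * n.factorial / Gamma (3 / 2)
  have hA : (fun n : ℕ => (ascPochhammer ℝ n).eval (3 / 2)) ~[atTop] G := by
    have h := isEquivalent_ascPochhammer_eval (s := 1 / 2) (by norm_num)
    rwa [show (1 / 2 + 1 : ℝ) = 3 / 2 by norm_num] at h
  have hB : (fun n : ℕ => (ascPochhammer ℝ n).eval (-1 / 2)) =o[atTop] G := by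
    have h := isLittleO_ascPochhammer_eval_add_two (-1 / 2)
    rw [show (-1 / 2 + 2 : ℝ) = 3 / 2 by norm_num] at h
    exact h.trans_isBigO hA.isBigO
  have hC : (fun n : ℕ => 2 * (n.factorial : ℝ)) =o[atTop] G := by
    have hsqrt : Tendsto (fun n : ℕ => (n : ℝ) ^ (1 / 2 : ℝ) / Gamma (3 / 2)) atTop atTop :=
      ((tendsto_rpow_atTop (by norm_num)).comp tendsto_natCast_atTop_atTop).atTop_div_const
        (Gamma_pos_of_pos (by norm_num))
    have h₂ : (fun _ : ℕ => (2 : ℝ)) =o[atTop] fun n : ℕ => (n : ℝ) ^ (1 / 2 : ℝ) / Gamma (3 / 2) :=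
      isLittleO_const_left.mpr (Or.inr (tendsto_norm_atTop_atTop.comp hsqrt))
    simpa only [G, div_mul_eq_mul_div] using
      h₂.mul_isBigO (isBigO_refl (fun n : ℕ => (n.factorial : ℝ)) atTop)
  exact (hA.sub_isLittleO hB).sub_isLittleO hC

/-- The sequence `n ↦ f13⁽ⁿ⁾(0)` (the number of leaf-labeled simplex time-consistent galled
trees with `n` leaves and one gall) is asymptotically equivalent to
`n ↦ (1/(2√π))·n^{1/2}·2ⁿ·n!` as `n → ∞`. -/
theorem stmt13 :
    Asymptotics.IsEquivalent Filter.atTop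
      (fun n : ℕ => iteratedDeriv n f13 0)
      (fun n : ℕ => (1 / (2 * Real.sqrt Real.pi)) * (n : ℝ) ^ ((1 : ℝ) / 2)
        * 2 ^ n * (Nat.factorial n : ℝ)) := by
  have hΓ : Gamma (3 / 2) = √π / 2 := by
    rw [show (3 / 2 : ℝ) = 1 / 2 + 1 by norm_num, Gamma_add_one (by norm_num), Gamma_one_half_eq]
    ring
  refine (isEquivalent_ascPochhammer_three_halves_sub.mul
    (IsEquivalent.refl (u := fun n : ℕ => (2 : ℝ) ^ n / 4))).congr_left ?_ |>.congr_right ?_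
  · filter_upwards [eventually_ne_atTop 0] with n hn
    rw [Pi.mul_apply, iteratedDeriv_f13_zero hn]
    ring
  · refine Eventually.of_forall fun n => ?_
    simp only [Pi.mul_apply, hΓ]
    ring
end

section
/- For every integer n ≥ 1, the n-th iterated derivative at 0 of the function f(t) = 1 − √(1−2t) satisfies f^{(n)}(0) = (2n−2)!/(2^{n−1}·(n−1)!). (Equivalently, the n-th Taylor coefficient of f at 0 is (2n−3)!!/n!, the exponential generating function coefficient counting leaf-labeled rooted binary trees with n leaves.) -/
/-!
Since `√(1 - 2t) = √2 · (1/2 - t)^(1/2)` holds for every real `t` (no localisation near `0` is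
needed), the `n`-th derivative of `f` is `-√2` times that of `t ↦ (1/2 - t)^(1/2)`, which is
`(-1)^n · (1/2)(1/2 - 1)⋯(1/2 - n + 1) · (1/2 - t)^(1/2 - n)`. At `t = 0` this leaves
`-(-2)^n` times the falling factorial of `1/2`, i.e. `1 · 3 ⋯ (2n - 3) = (2n-2)!/(2^(n-1) (n-1)!)`.
-/

open Nat

theorem iteratedDeriv_const_sub_rpow (n : ℕ) (a r t : ℝ) :
    iteratedDeriv n (fun x => (a - x) ^ r) t =
      (-1) ^ n * (descPochhammer ℝ n).eval r * (a - t) ^ (r - n) := by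
  rw [congrFun (iteratedDeriv_comp_const_sub n (· ^ r) a), iteratedDeriv_eq_iterate,
    Real.iter_deriv_rpow_const, smul_eq_mul, mul_assoc]

theorem neg_two_pow_mul_descPochhammer_eval_half (n : ℕ) :
    (-2 : ℝ) ^ (n + 1) * (descPochhammer ℝ (n + 1)).eval (1 / 2) * (2 ^ n * n !) =
      -(2 * n)! := by
  induction n with
  | zero => norm_num
  | succ n ih =>
    rw [descPochhammer_succ_eval, Nat.mul_add_one 2 n, Nat.factorial_succ, Nat.factorial_succ,
      Nat.factorial_succ]
    push_cast
    linear_combination (2 * (n : ℝ) + 1) * (2 * n + 2) * ih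

theorem sqrt_one_sub_two_mul (t : ℝ) : √(1 - 2 * t) = √2 * (1 / 2 - t) ^ (1 / 2 : ℝ) := by
  rw [← Real.sqrt_eq_rpow, ← Real.sqrt_mul zero_le_two]
  ring_nf

theorem sqrt_two_mul_half_rpow (m : ℕ) :
    √2 * (1 / 2 : ℝ) ^ (1 / 2 - (m + 1 : ℕ) : ℝ) = 2 ^ (m + 1) := by
  have h : -(2⁻¹ - (m + 1 : ℕ) : ℝ) = m + 1 / 2 := by push_cast; ring
  rw [one_div 2, Real.inv_rpow zero_le_two, ← Real.rpow_neg zero_le_two, h,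
    Real.rpow_add two_pos, Real.rpow_natCast, ← Real.sqrt_eq_rpow, pow_succ,
    mul_left_comm, Real.mul_self_sqrt zero_le_two]

/-- For every `n ≥ 1`, the `n`-th iterated derivative at `0` of `f(t) = 1 − √(1−2t)` equals
`(2n−2)!/(2^{n−1}·(n−1)!)` (i.e. `(2n−3)!!·n!/n! · …`; the `n`-th Taylor coefficient is
`(2n−3)!!/n!`, counting leaf-labeled rooted binary trees with `n` leaves). -/
theorem stmt18 :
    ∀ n : ℕ, 1 ≤ n →
      iteratedDeriv n (fun t : ℝ => 1 - Real.sqrt (1 - 2 * t)) 0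
        = (Nat.factorial (2 * n - 2) : ℝ)
            / (2 ^ (n - 1) * (Nat.factorial (n - 1) : ℝ)) := by
  intro n hn
  obtain ⟨m, rfl⟩ := Nat.exists_eq_add_of_le' hn
  simp_rw [sqrt_one_sub_two_mul]
  rw [iteratedDeriv_const_sub (by omega), iteratedDeriv_neg, iteratedDeriv_const_mul_field,
    iteratedDeriv_const_sub_rpow, sub_zero, eq_div_iff (by positivity),
    show 2 * (m + 1) - 2 = 2 * m by omega, Nat.add_sub_cancel]
  have hPoch := neg_two_pow_mul_descPochhammer_eval_half m
  rw [neg_pow] at hPoch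
  linear_combination -hPoch -
    (-1) ^ (m + 1) * (descPochhammer ℝ (m + 1)).eval (1 / 2) * (2 ^ m * m !) *
      sqrt_two_mul_half_rpow m
end

section
/- The sequence u_n = (2n−2)!/(2^{n−1}·(n−1)!) (the number of leaf-labeled rooted binary trees with n leaves, equal to (2n−3)!!) is asymptotically equivalent, as n → ∞, to the sequence n ↦ (1/(2√π))·n^{−3/2}·2^n·n!. -/
/-!
Multiplying numerator and denominator by `2n(2n - 1)` gives
`u_n = C(2n, n) · n! / ((2n - 1) · 2ⁿ)`. Stirling's formula applied to `(2n)!` and `n!` yields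
`C(2n, n) ~ 4ⁿ / √(πn)`, and with `2n - 1 ~ 2n` this is `2ⁿ n! / (2√π · n^{3/2})`.
-/

open Filter Real Asymptotics Nat

theorem Nat.centralBinom_isEquivalent :
    (fun n ↦ (centralBinom n : ℝ)) ~[atTop] fun n ↦ 4 ^ n / √(π * n) := by
  have hdouble : Tendsto (fun n : ℕ ↦ 2 * n) atTop atTop :=
    tendsto_id.const_mul_atTop' two_pos
  have hstirling := (Stirling.factorial_isEquivalent_stirling.comp_tendsto hdouble).div
    (Stirling.factorial_isEquivalent_stirling.pow 2)
  refine (hstirling.congr_left (Eventually.of_forall fun n ↦ ?_)).congr_right ?_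
  · simp only [Pi.div_apply, Pi.pow_apply, Function.comp_apply]
    rw [centralBinom, Nat.cast_choose ℝ (by omega : n ≤ 2 * n), show 2 * n - n = n by omega, sq]
  · filter_upwards [eventually_ne_atTop 0] with n hn
    have hs : √(2 * (2 * n : ℕ) * π) = 2 * √(π * n) := by
      rw [show (2 * (2 * n : ℕ) * π : ℝ) = 2 ^ 2 * (π * n) by push_cast; ring,
        sqrt_mul (by norm_num), sqrt_sq (by norm_num)]
    have hs2 : √(2 * n * π) ^ 2 = 2 * (π * n) := by rw [sq_sqrt (by positivity)]; ring
    have hsq : √(π * n) ^ 2 = π * n := sq_sqrt (by positivity)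
    simp only [Function.comp_apply, Pi.div_apply, Pi.pow_apply, hs, mul_pow, hs2]
    push_cast
    field_simp
    rw [hsq, show (4 : ℝ) ^ n = 2 ^ (2 * n) by rw [pow_mul]; norm_num]
    ring

theorem factorial_two_mul_sub_two_div_eq_centralBinom (n : ℕ) (hn : n ≠ 0) :
    ((2 * n - 2)! : ℝ) / (2 ^ (n - 1) * (n - 1)!) =
      centralBinom n * n ! / ((2 * n - 1) * 2 ^ n) := by
  obtain ⟨m, rfl⟩ := exists_add_one_eq.mpr (pos_of_ne_zero hn)
  rw [show 2 * (m + 1) - 2 = 2 * m by omega, Nat.add_sub_cancel, centralBinom,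
    Nat.cast_choose ℝ (by omega : m + 1 ≤ 2 * (m + 1)),
    show 2 * (m + 1) - (m + 1) = m + 1 by omega, show 2 * (m + 1) = 2 * m + 1 + 1 by ring]
  push_cast [Nat.factorial_succ]
  rw [show 2 * ((m : ℝ) + 1) - 1 = 2 * m + 1 by ring]
  field_simp
  ring

theorem isEquivalent_two_mul_sub_one :
    (fun n : ℕ ↦ (2 * n - 1 : ℝ)) ~[atTop] fun n ↦ 2 * n := by
  refine IsEquivalent.sub_isLittleO IsEquivalent.refl (isLittleO_const_left.mpr (Or.inr ?_))
  exact tendsto_norm_atTop_atTop.comp (tendsto_natCast_atTop_atTop.const_mul_atTop two_pos)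

/-- The sequence `u_n = (2n−2)!/(2^{n−1}·(n−1)!)` (the number of leaf-labeled rooted binary
trees with `n` leaves, equal to `(2n−3)!!`) is asymptotically equivalent to
`n ↦ (1/(2√π))·n^{−3/2}·2ⁿ·n!` as `n → ∞`. -/
theorem stmt19 :
    Asymptotics.IsEquivalent Filter.atTop
      (fun n : ℕ => (Nat.factorial (2 * n - 2) : ℝ)
        / (2 ^ (n - 1) * (Nat.factorial (n - 1) : ℝ)))
      (fun n : ℕ => (1 / (2 * Real.sqrt Real.pi)) * (n : ℝ) ^ (-(3 : ℝ) / 2)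
        * 2 ^ n * (Nat.factorial n : ℝ)) := by
  have hequiv :=
    (centralBinom_isEquivalent.mul (IsEquivalent.refl (u := fun n ↦ (n ! : ℝ)))).div
      (isEquivalent_two_mul_sub_one.mul (IsEquivalent.refl (u := fun n : ℕ ↦ (2 ^ n : ℝ))))
  refine (hequiv.congr_left ?_).congr_right ?_
  · filter_upwards [eventually_ne_atTop 0] with n hn
    exact (factorial_two_mul_sub_two_div_eq_centralBinom n hn).symm
  · filter_upwards [eventually_gt_atTop 0] with n hn
    have hn' : (0 : ℝ) < n := Nat.cast_pos.mpr hn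
    have hrpow : (n : ℝ) ^ (-(3 : ℝ) / 2) = (n * √n)⁻¹ := by
      rw [show -(3 : ℝ) / 2 = -(1 + 1 / 2) by norm_num, rpow_neg hn'.le, rpow_add hn', rpow_one,
        ← sqrt_eq_rpow]
    simp only [Pi.div_apply, Pi.mul_apply]
    rw [hrpow, sqrt_mul pi_pos.le, show (4 : ℝ) ^ n = 2 ^ n * 2 ^ n by rw [← mul_pow]; norm_num]
    field_simp
end
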